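/- arXiv:2604.08176 — 4 statements merged into one kernel-verified Lean document; each statement's English description precedes it below -/
import Mathlib

section
/- Let j be a natural number, let u : ℝ → ℝ be j-times continuously differentiable, let x : ℝ → ℝ^N satisfy, for every t ∈ ℝ, that x has derivative A x(t) + u(t) B at t, and define y(t) = ⟨C, x(t)⟩ + D u(t). Then for every t ∈ ℝ the j-th derivative of y satisfies y^(j)(t) = ⟨C, A^j x(t)⟩ + Σ_{i=0}^{j} h_{j-i} · u^(i)(t), where u^(i) denotes the i-th iterated derivative of u. -/
/-! Along the state equation, `⟨C, Aʲ x⟩` has derivative `⟨C, Aʲ⁺¹ x⟩ + hⱼ₊₁ u`, so the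
expansion `⟨C, Aʲ x⟩ + Σ_{i ≤ j} h_{j-i} u⁽ⁱ⁾` differentiates to the expansion at `j + 1`:
the new input term `hⱼ₊₁ u⁽⁰⁾` completes the shifted sum. Induction on `j` from
`y = ⟨C, x⟩ + h₀ u` gives the formula. -/

open Finset Matrix

/-- The Markov parameters of the state-space representation
`ẋ = A x + u B`, `y = ⟨C, x⟩ + D u`: `h 0 = D` and `h (k+1) = ⟨C, A^k B⟩`. -/
def markovParam {N : ℕ} (A : Matrix (Fin N) (Fin N) ℝ) (B C : Fin N → ℝ) (D : ℝ) : ℕ → ℝ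
  | 0 => D
  | (k + 1) => C ⬝ᵥ (A ^ k).mulVec B

theorem HasDerivAt.dotProduct_mulVec {m n : Type*} [Fintype m] [Fintype n] {f : ℝ → n → ℝ}
    {f' : n → ℝ} {t : ℝ} (hf : HasDerivAt f f' t) (C : m → ℝ) (M : Matrix m n ℝ) :
    HasDerivAt (fun s => C ⬝ᵥ M *ᵥ f s) (C ⬝ᵥ M *ᵥ f') t :=
  (LinearMap.toContinuousLinearMap
    ((dotProductBilin ℝ ℝ C).comp (Matrix.mulVecLin M))).hasFDerivAt.comp_hasDerivAt t hf

section StateSpace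

variable {N : ℕ} (A : Matrix (Fin N) (Fin N) ℝ) (B C : Fin N → ℝ) (D : ℝ)

theorem dotProduct_pow_mulVec_mulVec_add_smul (k : ℕ) (v : Fin N → ℝ) (a : ℝ) :
    C ⬝ᵥ (A ^ k) *ᵥ (A *ᵥ v + a • B) =
      C ⬝ᵥ (A ^ (k + 1)) *ᵥ v + markovParam A B C D (k + 1) * a := by
  rw [mulVec_add, dotProduct_add, mulVec_mulVec, ← pow_succ, mulVec_smul, dotProduct_smul,
    smul_eq_mul, mul_comm, markovParam]

noncomputable def outputDerivExpansion (x : ℝ → Fin N → ℝ) (u : ℝ → ℝ) (j : ℕ) (t : ℝ) : ℝ :=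
  C ⬝ᵥ (A ^ j) *ᵥ x t + ∑ i ∈ range (j + 1), markovParam A B C D (j - i) * iteratedDeriv i u t

theorem hasDerivAt_outputDerivExpansion {x : ℝ → Fin N → ℝ} {u : ℝ → ℝ}
    (hx : ∀ t, HasDerivAt x (A *ᵥ x t + u t • B) t) {j : ℕ}
    (hu : ∀ i ≤ j, Differentiable ℝ (iteratedDeriv i u)) (t : ℝ) :
    HasDerivAt (outputDerivExpansion A B C D x u j)
      (outputDerivExpansion A B C D x u (j + 1) t) t := by
  have hstate := (hx t).dotProduct_mulVec C (A ^ j)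
  have hinput : HasDerivAt
      (fun s => ∑ i ∈ range (j + 1), markovParam A B C D (j - i) * iteratedDeriv i u s)
      (∑ i ∈ range (j + 1), markovParam A B C D (j - i) * iteratedDeriv (i + 1) u t) t := by
    refine HasDerivAt.fun_sum fun i hi => ?_
    rw [iteratedDeriv_succ]
    exact ((hu i (Nat.lt_succ_iff.mp (mem_range.mp hi))) t).hasDerivAt.const_mul _
  refine (hstate.fun_add hinput).congr_deriv ?_
  rw [outputDerivExpansion, dotProduct_pow_mulVec_mulVec_add_smul A B C D,
    sum_range_succ' (fun i => markovParam A B C D (j + 1 - i) * iteratedDeriv i u t)]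
  simp only [Nat.succ_sub_succ, Nat.sub_zero, iteratedDeriv_zero]
  ring

end StateSpace

/-- If `u` is `j`-times continuously differentiable, `x` solves the state equation
`ẋ(t) = A x(t) + u(t) B` and `y(t) = ⟨C, x(t)⟩ + D u(t)`, then
`y⁽ʲ⁾(t) = ⟨C, Aʲ x(t)⟩ + Σ_{i=0}^{j} h_{j-i} u⁽ⁱ⁾(t)`. -/
theorem output_iteratedDeriv_eq {N : ℕ} (A : Matrix (Fin N) (Fin N) ℝ) (B C : Fin N → ℝ)
    (D : ℝ) (j : ℕ) (u : ℝ → ℝ) (hu : ContDiff ℝ (j : ℕ∞) u)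
    (x : ℝ → Fin N → ℝ) (hx : ∀ t : ℝ, HasDerivAt x (A.mulVec (x t) + u t • B) t)
    (y : ℝ → ℝ) (hy : ∀ t : ℝ, y t = C ⬝ᵥ x t + D * u t) :
    ∀ t : ℝ, iteratedDeriv j y t =
      C ⬝ᵥ (A ^ j).mulVec (x t) +
        ∑ i ∈ Finset.range (j + 1), markovParam A B C D (j - i) * iteratedDeriv i u t := by
  suffices h : ∀ k ≤ j, iteratedDeriv k y = outputDerivExpansion A B C D x u k from
    fun t => congrFun (h j le_rfl) t
  intro k hk
  induction k with
  | zero =>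
    funext t
    simp [outputDerivExpansion, hy t, markovParam]
  | succ k ih =>
    have hu' : ∀ i ≤ k, Differentiable ℝ (iteratedDeriv i u) := fun i hi =>
      hu.differentiable_iteratedDeriv i (by exact_mod_cast hi.trans_lt hk)
    rw [iteratedDeriv_succ, ih (Nat.le_of_succ_le hk)]
    exact funext fun t => (hasDerivAt_outputDerivExpansion A B C D hx hu' t).deriv
end

section
/- Let n ≥ 1 and r ≤ n, and suppose the Markov parameters satisfy h_i = 0 for all i < r and h_r ≠ 0. Let x : ℝ → ℝ^N be continuous at 0, and let u_0, …, u_{n-1}, y_0, …, y_{n-1} : ℝ → ℝ satisfy, for every j < n and every t ≠ 0, y_j(t) = ⟨C, A^j x(t)⟩ + Σ_{i=0}^{j} h_{j-i} · u_i(t). Suppose each u_i has a left limit u_i⁻ and a right limit u_i⁺ at t = 0. Then every y_j (j < n) has equal left and right limits at 0 (i.e., the output vector is continuous across t = 0) if and only if u_i⁺ = u_i⁻ for every index i with i + r < n (i.e., u and its first m − 1 derivatives, m = n − r, are continuous at 0). [Theorem 1 of the paper, stated for the equivalent state-space representation.] -/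
open Finset Matrix Filter Topology

/-!
Off `t = 0` the outputs are a continuous function of the state plus the triangular
convolution `y_j = ⟨C, A^j x⟩ + ∑_{i ≤ j} h_{j-i} u_i`, so the jump of `y_j` across `0` is
`∑_{i ≤ j} h_{j-i} (u_i⁺ - u_i⁻)`. With relative degree `r` this lower-triangular system has
`h_r ≠ 0` on its `r`-th subdiagonal and zeros above it, so the jumps of `y_0, …, y_{n-1}` all
vanish iff the jumps of `u_0, …, u_{n-r-1}` do, by forward substitution.
-/

section Convolution

variable {R : Type*}

theorem sum_range_mul_eq_zero_iff [Semiring R] [NoZeroDivisors R] {h : ℕ → R} {r : ℕ}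
    (hr0 : ∀ i < r, h i = 0) (hr : h r ≠ 0) (n : ℕ) (d : ℕ → R) :
    (∀ j < n, ∑ i ∈ range (j + 1), h (j - i) * d i = 0) ↔ ∀ i, i + r < n → d i = 0 := by
  constructor
  · intro H i
    induction i using Nat.strong_induction_on with
    | _ i IH =>
      intro hi
      have hdiag : ∑ k ∈ range (i + r + 1), h (i + r - k) * d k = h r * d i := by
        rw [sum_eq_single_of_mem i (mem_range.mpr (by omega)), Nat.add_sub_cancel_left]
        intro k hk hki
        rcases hki.lt_or_gt with hlt | hgt
        · rw [IH k hlt (by omega), mul_zero]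
        · rw [hr0 _ (by have := mem_range.mp hk; omega), zero_mul]
      exact (mul_eq_zero.mp (hdiag ▸ H (i + r) hi)).resolve_left hr
  · intro H j hj
    refine sum_eq_zero fun i hi => ?_
    by_cases hc : j - i < r
    · rw [hr0 _ hc, zero_mul]
    · rw [H i (by have := mem_range.mp hi; omega), mul_zero]

theorem sum_range_mul_eq_iff [Ring R] [NoZeroDivisors R] {h : ℕ → R} {r : ℕ}
    (hr0 : ∀ i < r, h i = 0) (hr : h r ≠ 0) (n : ℕ) (a b : ℕ → R) :
    (∀ j < n, ∑ i ∈ range (j + 1), h (j - i) * a i = ∑ i ∈ range (j + 1), h (j - i) * b i) ↔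
      ∀ i, i + r < n → a i = b i := by
  simpa only [Pi.sub_apply, mul_sub, sum_sub_distrib, sub_eq_zero] using
    sum_range_mul_eq_zero_iff hr0 hr n (a - b)

end Convolution

theorem exists_tendsto_and_tendsto_iff {α β : Type*} [TopologicalSpace β] [T2Space β]
    {f : α → β} {l₁ l₂ : Filter α} [l₁.NeBot] [l₂.NeBot] {a b : β}
    (ha : Tendsto f l₁ (𝓝 a)) (hb : Tendsto f l₂ (𝓝 b)) :
    (∃ L, Tendsto f l₁ (𝓝 L) ∧ Tendsto f l₂ (𝓝 L)) ↔ a = b :=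
  ⟨fun ⟨_, h₁, h₂⟩ => (tendsto_nhds_unique ha h₁).trans (tendsto_nhds_unique h₂ hb),
    fun hab => ⟨a, ha, hab ▸ hb⟩⟩

theorem tendsto_add_sum_range_mul {g y : ℝ → ℝ} {u : ℕ → ℝ → ℝ} {h v : ℕ → ℝ} {j : ℕ}
    {l : Filter ℝ} (hl : l ≤ 𝓝[≠] 0) (hg : ContinuousAt g 0)
    (hy : ∀ t ≠ 0, y t = g t + ∑ i ∈ range (j + 1), h (j - i) * u i t)
    (hu : ∀ i ≤ j, Tendsto (u i) l (𝓝 (v i))) :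
    Tendsto y l (𝓝 (g 0 + ∑ i ∈ range (j + 1), h (j - i) * v i)) := by
  refine ((hg.tendsto.mono_left (hl.trans nhdsWithin_le_nhds)).add (tendsto_finsetSum _
    fun i hi => (hu i (Nat.lt_succ_iff.mp (mem_range.mp hi))).const_mul (h (j - i)))).congr' ?_
  filter_upwards [hl self_mem_nhdsWithin] with t ht
  exact (hy t ht).symm

theorem output_continuous_iff_input_continuous_general {N : ℕ} (A : Matrix (Fin N) (Fin N) ℝ)
    (B C : Fin N → ℝ) (D : ℝ) (n r : ℕ)
    (hr0 : ∀ i < r, markovParam A B C D i = 0) (hr : markovParam A B C D r ≠ 0)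
    (x : ℝ → Fin N → ℝ) (hx : ContinuousAt x 0)
    (u y : ℕ → ℝ → ℝ)
    (hy : ∀ j < n, ∀ t : ℝ, t ≠ 0 →
      y j t = C ⬝ᵥ (A ^ j).mulVec (x t) +
        ∑ i ∈ Finset.range (j + 1), markovParam A B C D (j - i) * u i t)
    (um up : ℕ → ℝ)
    (hum : ∀ i < n, Tendsto (u i) (𝓝[<] 0) (𝓝 (um i)))
    (hup : ∀ i < n, Tendsto (u i) (𝓝[>] 0) (𝓝 (up i))) :
    (∀ j < n, ∃ L : ℝ, Tendsto (y j) (𝓝[<] 0) (𝓝 L) ∧ Tendsto (y j) (𝓝[>] 0) (𝓝 L)) ↔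
      (∀ i, i + r < n → up i = um i) := by
  have hstate (j : ℕ) : ContinuousAt (fun t => C ⬝ᵥ (A ^ j).mulVec (x t)) 0 :=
    (by fun_prop : Continuous fun v : Fin N → ℝ => C ⬝ᵥ (A ^ j).mulVec v).continuousAt.comp hx
  calc (∀ j < n, ∃ L, Tendsto (y j) (𝓝[<] 0) (𝓝 L) ∧ Tendsto (y j) (𝓝[>] 0) (𝓝 L))
      ↔ ∀ j < n, ∑ i ∈ range (j + 1), markovParam A B C D (j - i) * um i =
          ∑ i ∈ range (j + 1), markovParam A B C D (j - i) * up i := by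
        refine forall₂_congr fun j hj => ?_
        rw [exists_tendsto_and_tendsto_iff
          (tendsto_add_sum_range_mul (nhdsLT_le_nhdsNE 0) (hstate j) (hy j hj)
            fun i hi => hum i (by omega))
          (tendsto_add_sum_range_mul (nhdsGT_le_nhdsNE 0) (hstate j) (hy j hj)
            fun i hi => hup i (by omega)), add_right_inj]
    _ ↔ ∀ i, i + r < n → up i = um i := by
        simp only [sum_range_mul_eq_iff hr0 hr, eq_comm]

/-- Theorem 1 of the paper, for the equivalent state-space representation: if the system
has relative degree `r` (the first `r` Markov parameters vanish and the `r`-th does not),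
then the output vector `(y_0, …, y_{n-1})` is continuous across `t = 0` (equal one-sided
limits) iff `u_i⁺ = u_i⁻` for every `i` with `i + r < n`, i.e. iff `u` and its first
`m − 1` derivatives (`m = n − r`) are continuous at `0`. -/
theorem output_continuous_iff_input_continuous {N : ℕ} (A : Matrix (Fin N) (Fin N) ℝ)
    (B C : Fin N → ℝ) (D : ℝ) (n r : ℕ) (hn : 1 ≤ n) (hrn : r ≤ n)
    (hr0 : ∀ i < r, markovParam A B C D i = 0) (hr : markovParam A B C D r ≠ 0)
    (x : ℝ → Fin N → ℝ) (hx : ContinuousAt x 0)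
    (u y : ℕ → ℝ → ℝ)
    (hy : ∀ j < n, ∀ t : ℝ, t ≠ 0 →
      y j t = C ⬝ᵥ (A ^ j).mulVec (x t) +
        ∑ i ∈ Finset.range (j + 1), markovParam A B C D (j - i) * u i t)
    (um up : ℕ → ℝ)
    (hum : ∀ i < n, Tendsto (u i) (𝓝[<] 0) (𝓝 (um i)))
    (hup : ∀ i < n, Tendsto (u i) (𝓝[>] 0) (𝓝 (up i))) :
    (∀ j < n, ∃ L : ℝ, Tendsto (y j) (𝓝[<] 0) (𝓝 L) ∧ Tendsto (y j) (𝓝[>] 0) (𝓝 L)) ↔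
      (∀ i, i + r < n → up i = um i) :=
  output_continuous_iff_input_continuous_general A B C D n r hr0 hr x hx u y hy um up hum hup
end

section
/- Let A be an N×N real matrix, B, C ∈ ℝ^N, D ∈ ℝ, let n ≥ 1, and let a_0, a_1, …, a_n and b_0, b_1, …, b_n be real numbers with a_0 = 1. Suppose there exists R ≥ ‖A‖ (L∞ operator norm) such that for every real s > R the matrix sI − A is invertible and (Σ_{i=0}^{n} a_i s^{n-i}) · (⟨C, (sI − A)⁻¹ B⟩ + D) = Σ_{j=0}^{n} b_j s^{n-j}. Then for every j with 0 ≤ j ≤ n, b_j = Σ_{i=0}^{j} a_i h_{j-i}. -/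
open Finset Matrix

attribute [local instance] Matrix.linftyOpNormedAddCommGroup Matrix.linftyOpNormedRing
  Matrix.linftyOpNormedAlgebra

/-!
Put `t = s⁻¹` and multiply the hypothesis by `tⁿ`: it becomes `α(t) G(t⁻¹) = β(t)` with the
reversed polynomials `α = Σ aᵢ Xⁱ` and `β = Σ bⱼ Xʲ`. Expanding the resolvent to order `n`,
`G(t⁻¹) = Σ_{k ≤ n} h_k tᵏ + tⁿ ⟨C, Aⁿ (t⁻¹ I - A)⁻¹ B⟩`, and the resolvent tends to `0` as
`t → 0⁺`. So the polynomial `β - α · Σ_{k ≤ n} h_k Xᵏ` is `o(tⁿ)` at `0`, and its coefficients of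
degree `≤ n`, namely `bⱼ - Σ_{i ≤ j} aᵢ h_{j-i}`, vanish.
-/

open Filter Topology Polynomial

namespace Polynomial

variable {𝕜 : Type*} [NormedField 𝕜] {l : Filter 𝕜} [l.NeBot] {g : 𝕜 → 𝕜} {n : ℕ} {P : 𝕜[X]}

theorem coeff_zero_eq_zero_of_eval_eq_pow_mul (hl : l ≤ 𝓝 0) (hg : Tendsto g l (𝓝 0))
    (hP : ∀ᶠ t in l, P.eval t = t ^ n * g t) : P.coeff 0 = 0 := by
  have hlim : Tendsto P.eval l (𝓝 0) := by
    refine Tendsto.congr' (EventuallyEq.symm hP) ?_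
    simpa using (((continuous_pow n).tendsto 0).mono_left hl).mul hg
  rw [coeff_zero_eq_eval_zero]
  exact tendsto_nhds_unique ((P.continuous.tendsto 0).mono_left hl) hlim

theorem coeff_eq_zero_of_eval_eq_pow_mul (hl : l ≤ 𝓝[≠] 0) (hg : Tendsto g l (𝓝 0))
    (hP : ∀ᶠ t in l, P.eval t = t ^ n * g t) : ∀ j ≤ n, P.coeff j = 0 := by
  have hl₀ : l ≤ 𝓝 0 := hl.trans nhdsWithin_le_nhds
  induction n generalizing P with
  | zero =>
    intro j hj
    rw [Nat.le_zero.mp hj]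
    exact coeff_zero_eq_zero_of_eval_eq_pow_mul hl₀ hg hP
  | succ n ih =>
    have hcoeff₀ := coeff_zero_eq_zero_of_eval_eq_pow_mul hl₀ hg hP
    have hdivX : ∀ᶠ t in l, P.divX.eval t = t ^ n * g t := by
      filter_upwards [hP, hl self_mem_nhdsWithin] with t ht ht₀
      have := congrArg (eval t) (X_mul_divX_add P)
      rw [eval_add, eval_mul, eval_X, eval_C, hcoeff₀, add_zero, ht, pow_succ', mul_assoc] at this
      exact mul_left_cancel₀ ht₀ this
    rintro (_ | j) hj
    · exact hcoeff₀
    · rw [← coeff_divX]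
      exact ih hdivX j (by omega)

end Polynomial

namespace PowerSeries

variable {R : Type*} [Semiring R]

theorem eval_trunc_mk (f : ℕ → R) (m : ℕ) (t : R) :
    (trunc m (mk f)).eval t = ∑ i ∈ range m, f i * t ^ i := by
  simp [Polynomial.eval, eval₂_trunc_eq_sum_range]

theorem coeff_trunc_mk_mul_trunc_mk (f g : ℕ → R) {m j : ℕ} (hj : j < m) :
    (trunc m (mk f) * trunc m (mk g)).coeff j = ∑ i ∈ range (j + 1), f i * g (j - i) := by
  rw [Polynomial.coeff_mul, Nat.sum_antidiagonal_eq_sum_range_succ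
    (fun i k ↦ (trunc m (mk f)).coeff i * (trunc m (mk g)).coeff k)]
  refine sum_congr rfl fun i hi ↦ ?_
  rw [mem_range] at hi
  rw [coeff_trunc, coeff_trunc, if_pos (by omega), if_pos (by omega), coeff_mk, coeff_mk]

end PowerSeries

theorem sum_mul_pow_sub_eq_pow_mul_sum_mul_inv_pow {K : Type*} [Field K] (f : ℕ → K) (n : ℕ)
    {s : K} (hs : s ≠ 0) :
    ∑ i ∈ range (n + 1), f i * s ^ (n - i) = s ^ n * ∑ i ∈ range (n + 1), f i * s⁻¹ ^ i := by
  rw [mul_sum]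
  refine sum_congr rfl fun i hi ↦ ?_
  rw [pow_sub₀ s hs (Nat.lt_succ_iff.mp (mem_range.mp hi)), inv_pow]
  ring

theorem resolvent_eq_sum_add_pow_mul {𝕜 A : Type*} [Field 𝕜] [Ring A] [Algebra 𝕜 A] {a : A}
    {s : 𝕜} (hs : s ≠ 0) (hU : IsUnit (algebraMap 𝕜 A s - a)) (m : ℕ) :
    resolvent a s = ∑ k ∈ range m, s⁻¹ ^ (k + 1) • a ^ k + s⁻¹ ^ m • (a ^ m * resolvent a s) := by
  have hstep : resolvent a s = s⁻¹ • 1 + s⁻¹ • (a * resolvent a s) := by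
    have h : (algebraMap 𝕜 A s - a) * resolvent a s = 1 := Ring.mul_inverse_cancel _ hU
    rw [sub_mul, Algebra.algebraMap_eq_smul_one, smul_one_mul, sub_eq_iff_eq_add] at h
    rw [← smul_add, ← h, inv_smul_smul₀ hs]
  induction m with
  | zero => simp
  | succ m ih =>
    conv_lhs => rw [ih, hstep]
    rw [mul_add, mul_smul_comm, mul_smul_comm, mul_one, ← mul_assoc, ← pow_succ, smul_add,
      smul_smul, smul_smul, ← pow_succ, sum_range_succ, add_assoc]

namespace Matrix

theorem inv_smul_one_sub_eq_resolvent {n 𝕜 : Type*} [Fintype n] [DecidableEq n] [Field 𝕜]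
    (A : Matrix n n 𝕜) (s : 𝕜) : (s • (1 : Matrix n n 𝕜) - A)⁻¹ = resolvent A s := by
  rw [nonsing_inv_eq_ringInverse, resolvent, Algebra.algebraMap_eq_smul_one]

theorem tendsto_inv_smul_one_sub_atTop {n : Type*} [Fintype n] [DecidableEq n]
    (A : Matrix n n ℝ) : Tendsto (fun s : ℝ ↦ (s • (1 : Matrix n n ℝ) - A)⁻¹) atTop (𝓝 0) := by
  simp only [inv_smul_one_sub_eq_resolvent]
  exact (spectrum.resolvent_tendsto_cobounded A).mono_left IsOrderBornology.atTop_le_cobounded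

end Matrix

section markovParam

variable {N : ℕ} (A : Matrix (Fin N) (Fin N) ℝ) (B C : Fin N → ℝ) (D : ℝ) {s : ℝ}

theorem dotProduct_inv_smul_one_sub_mulVec_add_eq (hs : s ≠ 0)
    (hU : IsUnit (s • (1 : Matrix (Fin N) (Fin N) ℝ) - A)) (m : ℕ) :
    C ⬝ᵥ (s • (1 : Matrix (Fin N) (Fin N) ℝ) - A)⁻¹ *ᵥ B + D =
      ∑ k ∈ range (m + 1), markovParam A B C D k * s⁻¹ ^ k +
        s⁻¹ ^ m * C ⬝ᵥ (A ^ m * (s • (1 : Matrix (Fin N) (Fin N) ℝ) - A)⁻¹) *ᵥ B := by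
  rw [inv_smul_one_sub_eq_resolvent]
  conv_lhs => rw [resolvent_eq_sum_add_pow_mul hs (by rwa [Algebra.algebraMap_eq_smul_one]) m]
  simp only [inv_pow, add_mulVec, sum_mulVec, smul_mulVec, dotProduct_add, dotProduct_sum,
    dotProduct_smul, smul_eq_mul, markovParam, sum_range_succ', pow_zero, inv_one, mul_one]
  rw [add_right_comm]
  congr 2
  exact sum_congr rfl fun k _ ↦ mul_comm _ _

theorem eval_trunc_sub_trunc_mul_trunc_markovParam {n : ℕ} {a b : ℕ → ℝ} (hs : s ≠ 0)
    (hU : IsUnit (s • (1 : Matrix (Fin N) (Fin N) ℝ) - A))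
    (hG : (∑ i ∈ range (n + 1), a i * s ^ (n - i)) *
        (C ⬝ᵥ (s • (1 : Matrix (Fin N) (Fin N) ℝ) - A)⁻¹ *ᵥ B + D) =
      ∑ j ∈ range (n + 1), b j * s ^ (n - j)) :
    (PowerSeries.trunc (n + 1) (PowerSeries.mk b) - PowerSeries.trunc (n + 1) (PowerSeries.mk a) *
        PowerSeries.trunc (n + 1) (PowerSeries.mk (markovParam A B C D))).eval s⁻¹ =
      s⁻¹ ^ n * ((PowerSeries.trunc (n + 1) (PowerSeries.mk a)).eval s⁻¹ *
        C ⬝ᵥ (A ^ n * (s • (1 : Matrix (Fin N) (Fin N) ℝ) - A)⁻¹) *ᵥ B) := by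
  rw [sum_mul_pow_sub_eq_pow_mul_sum_mul_inv_pow a n hs,
    sum_mul_pow_sub_eq_pow_mul_sum_mul_inv_pow b n hs,
    dotProduct_inv_smul_one_sub_mulVec_add_eq A B C D hs hU n, mul_assoc,
    mul_right_inj' (pow_ne_zero _ hs)] at hG
  simp only [eval_sub, eval_mul, PowerSeries.eval_trunc_mk]
  linear_combination -hG

end markovParam

theorem realization_coefficients_eq_convolution_general {N : ℕ} (A : Matrix (Fin N) (Fin N) ℝ)
    (B C : Fin N → ℝ) (D : ℝ) (n : ℕ) (a b : ℕ → ℝ)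
    (hrealize : ∃ R : ℝ, ‖A‖ ≤ R ∧ ∀ s : ℝ, R < s →
      IsUnit (s • (1 : Matrix (Fin N) (Fin N) ℝ) - A) ∧
        (∑ i ∈ Finset.range (n + 1), a i * s ^ (n - i)) *
            (C ⬝ᵥ ((s • (1 : Matrix (Fin N) (Fin N) ℝ) - A)⁻¹).mulVec B + D) =
          ∑ j ∈ Finset.range (n + 1), b j * s ^ (n - j)) :
    ∀ j ≤ n, b j = ∑ i ∈ Finset.range (j + 1), a i * markovParam A B C D (j - i) := by
  obtain ⟨R, -, hR⟩ := hrealize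
  set α := PowerSeries.trunc (n + 1) (PowerSeries.mk a)
  set ψ : ℝ → ℝ := fun s ↦ C ⬝ᵥ (A ^ n * (s • (1 : Matrix (Fin N) (Fin N) ℝ) - A)⁻¹) *ᵥ B
  have hψ : Tendsto ψ atTop (𝓝 0) :=
    ((by fun_prop : Continuous fun M : Matrix (Fin N) (Fin N) ℝ ↦ C ⬝ᵥ (A ^ n * M) *ᵥ B).tendsto'
      0 0 (by simp)).comp (tendsto_inv_smul_one_sub_atTop A)
  have hP : ∀ᶠ t in 𝓝[>] 0,
      (PowerSeries.trunc (n + 1) (PowerSeries.mk b) -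
          α * PowerSeries.trunc (n + 1) (PowerSeries.mk (markovParam A B C D))).eval t =
        t ^ n * (α.eval t * ψ t⁻¹) := by
    filter_upwards [self_mem_nhdsWithin,
      tendsto_inv_nhdsGT_zero.eventually (eventually_gt_atTop R)] with t ht hRt
    simpa using eval_trunc_sub_trunc_mul_trunc_markovParam A B C D (inv_ne_zero ht.ne')
      (hR _ hRt).1 (hR _ hRt).2
  have hg : Tendsto (fun t ↦ α.eval t * ψ t⁻¹) (𝓝[>] 0) (𝓝 0) := by
    simpa using ((α.continuous.tendsto 0).mono_left nhdsWithin_le_nhds).mul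
      (hψ.comp tendsto_inv_nhdsGT_zero)
  intro j hj
  have hcoeff := coeff_eq_zero_of_eval_eq_pow_mul (nhdsGT_le_nhdsNE 0) hg hP j hj
  rwa [coeff_sub, PowerSeries.coeff_trunc_mk_mul_trunc_mk _ _ (by omega),
    PowerSeries.coeff_trunc, if_pos (by omega), PowerSeries.coeff_mk, sub_eq_zero] at hcoeff

/-- If the state-space representation realizes the transfer function
`(Σ_{j=0}^n b_j s^{n-j}) / (Σ_{i=0}^n a_i s^{n-i})` (with `a_0 = 1`) for all large real
`s`, then the numerator coefficients are the convolution of the denominator coefficients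
with the Markov parameters: `b_j = Σ_{i=0}^{j} a_i h_{j-i}`. -/
theorem realization_coefficients_eq_convolution {N : ℕ} (A : Matrix (Fin N) (Fin N) ℝ)
    (B C : Fin N → ℝ) (D : ℝ) (n : ℕ) (hn : 1 ≤ n) (a b : ℕ → ℝ) (ha : a 0 = 1)
    (hrealize : ∃ R : ℝ, ‖A‖ ≤ R ∧ ∀ s : ℝ, R < s →
      IsUnit (s • (1 : Matrix (Fin N) (Fin N) ℝ) - A) ∧
        (∑ i ∈ Finset.range (n + 1), a i * s ^ (n - i)) *
            (C ⬝ᵥ ((s • (1 : Matrix (Fin N) (Fin N) ℝ) - A)⁻¹).mulVec B + D) =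
          ∑ j ∈ Finset.range (n + 1), b j * s ^ (n - j)) :
    ∀ j ≤ n, b j = ∑ i ∈ Finset.range (j + 1), a i * markovParam A B C D (j - i) :=
  realization_coefficients_eq_convolution_general A B C D n a b hrealize
end

section
/- Let n ≥ 1, let a, h : ℕ → ℝ with a_0 = 1, and define b_j = Σ_{i=0}^{j} a_i h_{j-i}. Let Y⁺, Y⁻, U⁺, U⁻ : {0, …, n−1} → ℝ satisfy, for every p < n, the jump relation Y⁺_p − Y⁻_p = Σ_{q=0}^{p} h_{p-q} · (U⁺_q − U⁻_q). Then the following identity holds in ℝ[X]: Σ_{p=0}^{n-1} (Σ_{i=0}^{n-1-p} a_i X^{n-1-p-i}) Y⁺_p − Σ_{p=0}^{n-1} (Σ_{i=0}^{n-1-p} b_i X^{n-1-p-i}) U⁺_p = Σ_{p=0}^{n-1} (Σ_{i=0}^{n-1-p} a_i X^{n-1-p-i}) Y⁻_p − Σ_{p=0}^{n-1} (Σ_{i=0}^{n-1-p} b_i X^{n-1-p-i}) U⁻_p. [Theorem 2 of the paper: the initial-condition polynomial appearing in the Laplace-transform solution of the ODE y^{(n)} + Σ a_i y^{(n-i)}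 = Σ b_j u^{(n-j)} gives the same result whether evaluated with first conditions (values at 0⁺) or previous conditions (values at 0⁻).] -/
open Finset Polynomial

/-!
Writing `c ⋆ v` for the Cauchy product, the initial-condition polynomial built from
coefficients `c` and data `v` is `Σ_{m<n} (c ⋆ v)_m X^{n-1-m}`, and it only sees `v` below
degree `n`. The jump relation says that `Y⁺ - Y⁻` agrees with `h ⋆ (U⁺ - U⁻)` below degree `n`,
and `b = a ⋆ h`, so by associativity of power-series multiplication
`a ⋆ (Y⁺ - Y⁻) = (a ⋆ h) ⋆ (U⁺ - U⁻) = b ⋆ (U⁺ - U⁻)` there.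
-/

namespace PowerSeries

variable {R : Type*} [CommSemiring R]

theorem mk_coeff (φ : R⟦X⟧) : mk (fun n => coeff n φ) = φ :=
  ext fun n => coeff_mk n _

theorem coeff_mk_mul_mk (f g : ℕ → R) (m : ℕ) :
    coeff m (mk f * mk g) = ∑ k ∈ range (m + 1), f k * g (m - k) := by
  rw [coeff_mul,
    Nat.sum_antidiagonal_eq_sum_range_succ (fun i j => coeff i (mk f) * coeff j (mk g))]
  simp only [coeff_mk]

end PowerSeries

namespace Polynomial

variable {R : Type*} [CommRing R]

noncomputable def initialConditionPoly (n : ℕ) (c v : ℕ → R) : R[X] :=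
  ∑ p ∈ range n, (∑ i ∈ range (n - p), C (c i) * X ^ (n - 1 - p - i)) * C (v p)

theorem initialConditionPoly_eq_sum_coeff_mul (n : ℕ) (c v : ℕ → R) :
    initialConditionPoly n c v =
      ∑ m ∈ range n, C (PowerSeries.coeff m (PowerSeries.mk c * PowerSeries.mk v)) *
        X ^ (n - 1 - m) := by
  let f : ℕ → ℕ → R[X] := fun p i => C (v p * c i) * X ^ (n - 1 - (p + i))
  calc initialConditionPoly n c v = ∑ p ∈ range n, ∑ i ∈ range (n - p), f p i := by
        refine sum_congr rfl fun p _ => sum_mul _ _ _ |>.trans <| sum_congr rfl fun i _ => ?_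
        simp only [f, C_mul, Nat.sub_sub (n - 1)]
        ring
    _ = ∑ m ∈ range n, ∑ k ∈ range (m + 1), f k (m - k) := (sum_range_diag_flip n f).symm
    _ = _ := by
        refine sum_congr rfl fun m _ => ?_
        rw [mul_comm (PowerSeries.mk c), PowerSeries.coeff_mk_mul_mk, map_sum, sum_mul]
        refine sum_congr rfl fun k hk => ?_
        simp only [f, Nat.add_sub_cancel' (Nat.lt_succ_iff.mp (mem_range.mp hk))]

theorem initialConditionPoly_sub (n : ℕ) (c v w : ℕ → R) :
    initialConditionPoly n c v - initialConditionPoly n c w =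
      initialConditionPoly n c (v - w) := by
  simp only [initialConditionPoly, ← sum_sub_distrib, ← mul_sub, Pi.sub_apply, C_sub]

theorem initialConditionPoly_congr {n : ℕ} {c v w : ℕ → R} (h : ∀ p < n, v p = w p) :
    initialConditionPoly n c v = initialConditionPoly n c w :=
  sum_congr rfl fun p hp => by rw [h p (mem_range.mp hp)]

theorem initialConditionPoly_coeff_mul (n : ℕ) (c g w : ℕ → R) :
    initialConditionPoly n c (fun p => PowerSeries.coeff p (PowerSeries.mk g * PowerSeries.mk w)) =
      initialConditionPoly n
        (fun j => PowerSeries.coeff j (PowerSeries.mk c * PowerSeries.mk g)) w := by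
  simp only [initialConditionPoly_eq_sum_coeff_mul, PowerSeries.mk_coeff, mul_assoc]

end Polynomial

theorem initial_condition_polynomial_invariance_general (n : ℕ) (a h : ℕ → ℝ)
    (b : ℕ → ℝ)
    (hb : ∀ j, b j = ∑ i ∈ Finset.range (j + 1), a i * h (j - i))
    (Yp Ym Up Um : ℕ → ℝ)
    (hjump : ∀ p < n, Yp p - Ym p =
      ∑ q ∈ Finset.range (p + 1), h (p - q) * (Up q - Um q)) :
    (∑ p ∈ Finset.range n,
        (∑ i ∈ Finset.range (n - p),
          Polynomial.C (a i) * (Polynomial.X : ℝ[X]) ^ (n - 1 - p - i)) * Polynomial.C (Yp p)) -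
      (∑ p ∈ Finset.range n,
        (∑ i ∈ Finset.range (n - p),
          Polynomial.C (b i) * (Polynomial.X : ℝ[X]) ^ (n - 1 - p - i)) * Polynomial.C (Up p)) =
    (∑ p ∈ Finset.range n,
        (∑ i ∈ Finset.range (n - p),
          Polynomial.C (a i) * (Polynomial.X : ℝ[X]) ^ (n - 1 - p - i)) * Polynomial.C (Ym p)) -
      (∑ p ∈ Finset.range n,
        (∑ i ∈ Finset.range (n - p),
          Polynomial.C (b i) * (Polynomial.X : ℝ[X]) ^ (n - 1 - p - i)) * Polynomial.C (Um p)) := by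
  change initialConditionPoly n a Yp - initialConditionPoly n b Up =
    initialConditionPoly n a Ym - initialConditionPoly n b Um
  have hb' : b = fun j => PowerSeries.coeff j (PowerSeries.mk a * PowerSeries.mk h) :=
    funext fun j => by rw [hb, PowerSeries.coeff_mk_mul_mk]
  have hjump' : ∀ p < n, (Yp - Ym) p =
      PowerSeries.coeff p (PowerSeries.mk h * PowerSeries.mk (Up - Um)) := fun p hp => by
    rw [Pi.sub_apply, hjump p hp, mul_comm, PowerSeries.coeff_mk_mul_mk]
    exact sum_congr rfl fun q _ => mul_comm _ _
  have key : initialConditionPoly n a Yp - initialConditionPoly n a Ym =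
      initialConditionPoly n b Up - initialConditionPoly n b Um := by
    rw [initialConditionPoly_sub, initialConditionPoly_sub, initialConditionPoly_congr hjump',
      initialConditionPoly_coeff_mul, hb']
  linear_combination key

/-- Theorem 2 of the paper: if the jumps satisfy
`Y⁺_p − Y⁻_p = Σ_{q=0}^{p} h_{p-q} (U⁺_q − U⁻_q)` for all `p < n`, and
`b_j = Σ_{i=0}^{j} a_i h_{j-i}` with `a_0 = 1`, then the initial-condition polynomial of
the Laplace-transform solution is the same whether evaluated with first conditions
(values at `0⁺`) or with previous conditions (values at `0⁻`). -/
theorem initial_condition_polynomial_invariance (n : ℕ) (hn : 1 ≤ n) (a h : ℕ → ℝ)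
    (ha : a 0 = 1) (b : ℕ → ℝ)
    (hb : ∀ j, b j = ∑ i ∈ Finset.range (j + 1), a i * h (j - i))
    (Yp Ym Up Um : ℕ → ℝ)
    (hjump : ∀ p < n, Yp p - Ym p =
      ∑ q ∈ Finset.range (p + 1), h (p - q) * (Up q - Um q)) :
    (∑ p ∈ Finset.range n,
        (∑ i ∈ Finset.range (n - p),
          Polynomial.C (a i) * (Polynomial.X : ℝ[X]) ^ (n - 1 - p - i)) * Polynomial.C (Yp p)) -
      (∑ p ∈ Finset.range n,
        (∑ i ∈ Finset.range (n - p),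
          Polynomial.C (b i) * (Polynomial.X : ℝ[X]) ^ (n - 1 - p - i)) * Polynomial.C (Up p)) =
    (∑ p ∈ Finset.range n,
        (∑ i ∈ Finset.range (n - p),
          Polynomial.C (a i) * (Polynomial.X : ℝ[X]) ^ (n - 1 - p - i)) * Polynomial.C (Ym p)) -
      (∑ p ∈ Finset.range n,
        (∑ i ∈ Finset.range (n - p),
          Polynomial.C (b i) * (Polynomial.X : ℝ[X]) ^ (n - 1 - p - i)) * Polynomial.C (Um p)) :=
  initial_condition_polynomial_invariance_general n a h b hb Yp Ym Up Um hjump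
end
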